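/- arXiv:1511.00942 — 3 statements merged into one kernel-verified Lean document; each statement's English description precedes it below -/
import Mathlib

section
/- Let w > 1, ϱ(k) = √((1−w)² + 4w·cos²(k)), λ₋(k) = 1 + w − ϱ(k), and c_w² = 2w/(1+w). Then for all k ∈ ℝ, |λ₋'(k)| ≤ 2·c_w²·|k|. -/
open Real

/-! The radicand is `(1 + w)² cos² k + (1 - w)² sin² k`, so `ϱ(k) ≥ (1 + w) |cos k|`.
Since `λ₋'(k) = 4 w sin k cos k / ϱ(k)`, the factor `cos k` cancels against this lower bound,
leaving `|λ₋'(k)| ≤ 4 w |sin k| / (1 + w) ≤ 4 w |k| / (1 + w)`. -/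

lemma radicand_eq_sq_add_sq (w x : ℝ) :
    (1 - w)^2 + 4*w*cos x^2 = ((1 + w) * cos x)^2 + ((1 - w) * sin x)^2 := by
  linear_combination -(1 - w)^2 * sin_sq_add_cos_sq x

lemma radicand_pos {w : ℝ} (hw₀ : 0 ≤ w) (hw₁ : w ≠ 1) (x : ℝ) :
    0 < (1 - w)^2 + 4*w*cos x^2 := by
  have : 0 < (1 - w)^2 := pow_two_pos_of_ne_zero (sub_ne_zero.mpr hw₁.symm)
  positivity

lemma abs_mul_abs_cos_le_sqrt_radicand (w x : ℝ) :
    |1 + w| * |cos x| ≤ √((1 - w)^2 + 4*w*cos x^2) := by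
  rw [← abs_mul]
  apply abs_le_sqrt
  rw [radicand_eq_sq_add_sq]
  exact le_add_of_nonneg_right (sq_nonneg _)

lemma hasDerivAt_lambdaMinus (w x : ℝ) (h : (1 - w)^2 + 4*w*cos x^2 ≠ 0) :
    HasDerivAt (fun x => 1 + w - √((1 - w)^2 + 4*w*cos x^2))
      (4*w*sin x*cos x / √((1 - w)^2 + 4*w*cos x^2)) x := by
  have hrad : HasDerivAt (fun x => (1 - w)^2 + 4*w*cos x^2) (-(8*w*sin x*cos x)) x := by
    refine ((((hasDerivAt_cos x).fun_pow 2).const_mul (4*w)).const_add _).congr_deriv ?_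
    norm_num
    ring
  refine ((hrad.sqrt h).const_sub (1 + w)).congr_deriv ?_
  field_simp
  ring

lemma abs_lambdaMinus_deriv_le {w : ℝ} (hw : 0 < w) (x : ℝ) :
    |4*w*sin x*cos x / √((1 - w)^2 + 4*w*cos x^2)| ≤ 4*w/(1 + w) * |sin x| := by
  set ϱ := √((1 - w)^2 + 4*w*cos x^2)
  have hcos : |cos x| / ϱ ≤ 1 / (1 + w) := by
    rcases (show 0 ≤ ϱ from sqrt_nonneg _).eq_or_lt with h | h
    · rw [← h, div_zero]; positivity
    · rw [div_le_div_iff₀ h (by linarith), one_mul, mul_comm]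
      simpa [abs_of_pos (by linarith : 0 < 1 + w)] using abs_mul_abs_cos_le_sqrt_radicand w x
  calc |4*w*sin x*cos x / ϱ| = 4*w*|sin x| * (|cos x| / ϱ) := by
        rw [abs_div, abs_mul, abs_mul, abs_mul, abs_of_nonneg (sqrt_nonneg _),
          abs_of_pos (by norm_num : (0:ℝ) < 4), abs_of_pos hw]
        ring
    _ ≤ 4*w*|sin x| * (1 / (1 + w)) := by gcongr
    _ = 4*w/(1 + w) * |sin x| := by ring

/-- Derivative bound for the acoustic branch: |λ₋'(k)| ≤ 2 c_w² |k| with c_w² = 2w/(1+w). -/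
theorem lambdaMinus_deriv_bound (w : ℝ) (hw : 1 < w) (k : ℝ) :
    |deriv (fun x => 1 + w - Real.sqrt ((1 - w)^2 + 4*w*(Real.cos x)^2)) k|
      ≤ 2 * (2*w/(1+w)) * |k| := by
  have hpos := radicand_pos (by linarith) hw.ne' k
  rw [(hasDerivAt_lambdaMinus w k hpos.ne').deriv]
  calc _ ≤ 4*w/(1 + w) * |sin k| := abs_lambdaMinus_deriv_le (by linarith) k
    _ ≤ 4*w/(1 + w) * |k| := mul_le_mul_of_nonneg_left abs_sin_le_abs (by positivity)
    _ = 2 * (2*w/(1+w)) * |k| := by ring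
end

section
/- Let w > 1, λ₋(k) = 1 + w − √((1−w)² + 4w·cos²(k)), and c_w² = 2w/(1+w). If c ∈ ℝ with c² ≥ c_w², then c²k² − λ₋(k) > 0 for every real k ≠ 0. -/
/-!
Put `a = 1 + w` and `L = c_w² k² = 2 w k² / a`. If `L > a` there is nothing to prove, since
`λ₋(k) ≤ a`. Otherwise `λ₋(k) < L` is equivalent to `(a - L)² < (1 - w)² + 4 w cos² k`, that is,
to `1 - k² + μ k⁴ < cos² k` with `μ = w / a² ≤ 1/4`. For `k² ≤ 2` this follows from
`1 - k²/2 < cos k` (squared, both sides being nonnegative), and for `k² > 2` the left side is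
negative because `2 μ k² = L / a ≤ 1`.
-/

open Real

noncomputable def lowerBranch (w k : ℝ) : ℝ :=
  1 + w - √((1 - w) ^ 2 + 4 * w * cos k ^ 2)

theorem one_sub_sq_add_mul_pow_four_lt_cos_sq {μ x : ℝ} (hμ : μ ≤ 1 / 4) (hx : x ≠ 0)
    (hμx : 2 * μ * x ^ 2 ≤ 1) : 1 - x ^ 2 + μ * x ^ 4 < cos x ^ 2 := by
  rcases le_or_gt (x ^ 2) 2 with hx2 | hx2
  · have hcos : (1 - x ^ 2 / 2) ^ 2 < cos x ^ 2 :=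
      pow_lt_pow_left₀ (one_sub_sq_div_two_lt_cos hx) (by linarith) two_ne_zero
    nlinarith [pow_nonneg (sq_nonneg x) 2]
  · nlinarith [sq_nonneg (cos x)]

theorem lowerBranch_lt {w k : ℝ} (hw : 0 < w) (hk : k ≠ 0) :
    lowerBranch w k < 2 * w / (1 + w) * k ^ 2 := by
  have ha : 0 < 1 + w := by linarith
  rcases le_or_gt (2 * w / (1 + w) * k ^ 2) (1 + w) with hle | hlt
  · have hμ : w / (1 + w) ^ 2 ≤ 1 / 4 := by
      rw [div_le_iff₀ (by positivity)]
      nlinarith [sq_nonneg (1 - w)]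
    have hμk : 2 * (w / (1 + w) ^ 2) * k ^ 2 ≤ 1 := by
      rw [show 2 * (w / (1 + w) ^ 2) * k ^ 2 = 2 * w / (1 + w) * k ^ 2 / (1 + w) by
        field_simp, div_le_one ha]
      exact hle
    have hcos := one_sub_sq_add_mul_pow_four_lt_cos_sq hμ hk hμk
    have hsq : (1 + w - 2 * w / (1 + w) * k ^ 2) ^ 2
        = (1 - w) ^ 2 + 4 * w * (1 - k ^ 2 + w / (1 + w) ^ 2 * k ^ 4) := by
      field_simp
      ring
    have hroot : 1 + w - 2 * w / (1 + w) * k ^ 2 < √((1 - w) ^ 2 + 4 * w * cos k ^ 2) := by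
      rw [lt_sqrt (sub_nonneg.2 hle), hsq]
      gcongr
    unfold lowerBranch
    linarith
  · unfold lowerBranch
    linarith [sqrt_nonneg ((1 - w) ^ 2 + 4 * w * cos k ^ 2)]

/-- Supersonic condition: if c² ≥ c_w² then c²k² − λ₋(k) > 0 for all k ≠ 0. -/
theorem supersonic_positivity (w c : ℝ) (hw : 1 < w) (hc : 2*w/(1+w) ≤ c^2)
    (k : ℝ) (hk : k ≠ 0) :
    0 < c^2 * k^2 - (1 + w - Real.sqrt ((1 - w)^2 + 4*w*(Real.cos k)^2)) := by
  have hbranch : lowerBranch w k < 2 * w / (1 + w) * k ^ 2 := lowerBranch_lt (by linarith) hk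
  have hc' : 2 * w / (1 + w) * k ^ 2 ≤ c ^ 2 * k ^ 2 := by gcongr
  unfold lowerBranch at hbranch
  linarith
end

section
/- Let w > 1, ϱ(k) = √((1−w)² + 4w·cos²(k)), and λ₋(k) = 1 + w − ϱ(k). Then the third derivative λ₋'''(k) is strictly negative for all k ∈ (0, π/2). -/
/-!
Write `ϱ(x) = √(p + q cos² x)` with `p = (1 - w)²` and `q = 4w`, so that `λ₋ = 1 + w - ϱ`.
Differentiating three times and using `ϱ² = p + q cos² x` and `sin² x + cos² x = 1` gives
`ϱ''' = q sin x cos x (ϱ⁴ + 3p(p + q)) / ϱ⁵`. The numerator is `4 q_w(cos² x)` in the notation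
of the paper; it is evidently positive because `p > 0` and `p + q = (1 + w)² > 0`.
-/

open Real

noncomputable def rho (p q x : ℝ) : ℝ := √(p + q * cos x ^ 2)

section
variable {p q : ℝ}

lemma add_mul_cos_sq_pos (hp : 0 < p) (hpq : 0 < p + q) (x : ℝ) : 0 < p + q * cos x ^ 2 := by
  have h0 := sq_nonneg (cos x)
  have h1 := cos_sq_le_one x
  rcases le_or_gt 0 q with hq | hq <;> nlinarith

lemma rho_pos (hp : 0 < p) (hpq : 0 < p + q) (x : ℝ) : 0 < rho p q x :=
  sqrt_pos.mpr (add_mul_cos_sq_pos hp hpq x)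

lemma rho_sq (hp : 0 < p) (hpq : 0 < p + q) (x : ℝ) : rho p q x ^ 2 = p + q * cos x ^ 2 :=
  sq_sqrt (add_mul_cos_sq_pos hp hpq x).le

lemma hasDerivAt_rho (hp : 0 < p) (hpq : 0 < p + q) (x : ℝ) :
    HasDerivAt (rho p q) (-q * sin x * cos x / rho p q x) x := by
  have h := (((hasDerivAt_cos x).pow 2).const_mul q).const_add p |>.sqrt
    (add_mul_cos_sq_pos hp hpq x).ne'
  refine h.congr_deriv ?_
  simp only [Pi.pow_apply]
  norm_num
  have := (rho_pos hp hpq x).ne'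
  unfold rho at *
  field_simp

lemma deriv_rho (hp : 0 < p) (hpq : 0 < p + q) :
    deriv (rho p q) = fun x => -q * sin x * cos x / rho p q x :=
  funext fun x => (hasDerivAt_rho hp hpq x).deriv

lemma deriv_deriv_rho (hp : 0 < p) (hpq : 0 < p + q) :
    deriv (deriv (rho p q)) =
      fun x => -q * (q * cos x ^ 4 + 2 * p * cos x ^ 2 - p) / rho p q x ^ 3 := by
  rw [deriv_rho hp hpq]
  funext x
  have h := (((hasDerivAt_sin x).const_mul (-q)).mul (hasDerivAt_cos x)).fun_div
    (hasDerivAt_rho hp hpq x) (rho_pos hp hpq x).ne'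
  refine (h.congr_deriv ?_).deriv
  simp only [Pi.mul_apply]
  have := (rho_pos hp hpq x).ne'
  have hsq := rho_sq hp hpq x
  have hsc := sin_sq_add_cos_sq x
  field_simp
  linear_combination q * (sin x ^ 2 - cos x ^ 2) * hsq + q * p * hsc

lemma iteratedDeriv_three_rho (hp : 0 < p) (hpq : 0 < p + q) (x : ℝ) :
    iteratedDeriv 3 (rho p q) x =
      q * sin x * cos x * (rho p q x ^ 4 + 3 * p * (p + q)) / rho p q x ^ 5 := by
  rw [iteratedDeriv_succ', iteratedDeriv_succ', iteratedDeriv_one, deriv_deriv_rho hp hpq]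
  have hnum : HasDerivAt (fun x => -q * (q * cos x ^ 4 + 2 * p * cos x ^ 2 - p))
      (-q * (q * (4 * cos x ^ 3 * -sin x) + 2 * p * (2 * cos x * -sin x))) x := by
    refine ((((hasDerivAt_cos x).pow 4).const_mul q).add
      (((hasDerivAt_cos x).pow 2).const_mul (2 * p))).sub_const p |>.const_mul (-q)
      |>.congr_deriv ?_
    push_cast
    ring
  have h := hnum.fun_div ((hasDerivAt_rho hp hpq x).pow 3) (pow_ne_zero 3 (rho_pos hp hpq x).ne')
  refine (h.congr_deriv ?_).deriv
  simp only [Pi.pow_apply]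
  norm_num
  have := (rho_pos hp hpq x).ne'
  have hsq := rho_sq hp hpq x
  field_simp
  linear_combination q * cos x * sin x * (3 * (p + q * cos x ^ 2) - rho p q x ^ 2) * hsq

end

/-- The third derivative of the acoustic branch λ₋ is strictly negative on (0, π/2). -/
theorem lambdaMinus_third_deriv_neg (w : ℝ) (hw : 1 < w) (k : ℝ)
    (hk : k ∈ Set.Ioo 0 (Real.pi/2)) :
    iteratedDeriv 3 (fun x => 1 + w - Real.sqrt ((1-w)^2 + 4*w*(Real.cos x)^2)) k < 0 := by
  have hp : 0 < (1 - w) ^ 2 := by nlinarith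
  have hpq : 0 < (1 - w) ^ 2 + 4 * w := by nlinarith
  have hsin : 0 < sin k := sin_pos_of_pos_of_lt_pi hk.1 (by linarith [hk.2, pi_pos])
  have hcos : 0 < cos k := cos_pos_of_mem_Ioo ⟨by linarith [hk.1, pi_pos], hk.2⟩
  have hrho := rho_pos hp hpq k
  change iteratedDeriv 3 (fun x => (1 + w) - rho ((1 - w) ^ 2) (4 * w) x) k < 0
  rw [iteratedDeriv_const_sub three_pos, iteratedDeriv_neg, iteratedDeriv_three_rho hp hpq,
    neg_neg_iff_pos]
  positivity
end
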